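/- For all Schwartz functions f, g : ℝ → ℝ and every α with 0 < α < 2, the fractional derivative ₂D^α f(x) = Γ(1+α) (sin(απ/2)/π) ∫_{0}^{∞} (f(x+ξ) - 2f(x) + f(x-ξ)) ξ^{-(α+1)} dξ is symmetric with respect to the L² pairing: ∫_{-∞}^{∞} (₂D^α f)(x) g(x) dx = ∫_{-∞}^{∞} f(x) (₂D^α g)(x) dx. -/

import Mathlib

open MeasureTheory Real Set


/-- Bound on a Schwartz function. -/
lemma schwartz_bdd (f : SchwartzMap ℝ ℝ) : ∃ M : ℝ, 0 ≤ M ∧ ∀ x, ‖f x‖ ≤ M :=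
  ⟨SchwartzMap.seminorm ℝ 0 0 f, apply_nonneg _ _, fun x => f.norm_le_seminorm ℝ x⟩

/-- Quadratic bound on the second difference of a Schwartz function. -/
lemma schwartz_second_diff_bdd (f : SchwartzMap ℝ ℝ) :
    ∃ S : ℝ, 0 ≤ S ∧ ∀ x ξ : ℝ, |f (x + ξ) - 2 * f x + f (x - ξ)| ≤ S * ξ ^ 2 := by
  have hsm : ContDiff ℝ (⊤ : ℕ∞) f := f.smooth ⊤
  have hd1 : Differentiable ℝ f := hsm.differentiable (by simp)
  have hder : ContDiff ℝ (⊤ : ℕ∞) (deriv f) := (contDiff_infty_iff_deriv.mp hsm).2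
  have hd2 : Differentiable ℝ (deriv f) := hder.differentiable (by simp)
  set S : ℝ := SchwartzMap.seminorm ℝ 0 2 f with hS
  have hS0 : 0 ≤ S := apply_nonneg _ _
  have hbound2 : ∀ t : ℝ, ‖deriv (deriv f) t‖ ≤ S := by
    intro t
    have := SchwartzMap.le_seminorm ℝ 0 2 f t
    simpa [norm_iteratedFDeriv_eq_norm_iteratedDeriv, iteratedDeriv_succ,
      iteratedDeriv_one] using this
  have hlip : ∀ a b : ℝ, ‖deriv f a - deriv f b‖ ≤ S * ‖a - b‖ := by
    intro a b
    exact Convex.norm_image_sub_le_of_norm_deriv_le (fun x _ => (hd2 x))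
      (fun x _ => hbound2 x) convex_univ (mem_univ b) (mem_univ a)
  refine ⟨S, hS0, fun x ξ => ?_⟩
  have hci : ∀ a b : ℝ, IntervalIntegrable (deriv f) volume a b :=
    fun a b => hder.continuous.intervalIntegrable a b
  have h1 : ∫ t in x..(x + ξ), deriv f t = f (x + ξ) - f x :=
    intervalIntegral.integral_deriv_eq_sub (fun t _ => hd1 t) (hci _ _)
  have h2 : ∫ t in x..(x + ξ), deriv f (t - ξ) = f x - f (x - ξ) := by
    rw [intervalIntegral.integral_comp_sub_right (deriv f) ξ]
    have : x + ξ - ξ = x := by ring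
    rw [this]
    exact intervalIntegral.integral_deriv_eq_sub (fun t _ => hd1 t) (hci _ _)
  have h3 : f (x + ξ) - 2 * f x + f (x - ξ)
      = ∫ t in x..(x + ξ), (deriv f t - deriv f (t - ξ)) := by
    rw [intervalIntegral.integral_sub (hci _ _)
      ((show Continuous fun t : ℝ => deriv f (t - ξ) from hder.continuous.comp (continuous_id.sub continuous_const)).intervalIntegrable _ _), h1, h2]
    ring
  have h4 : ‖∫ t in x..(x + ξ), (deriv f t - deriv f (t - ξ))‖ ≤ (S * |ξ|) * |x + ξ - x| := by
    apply intervalIntegral.norm_integral_le_of_norm_le_const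
    intro t _
    have := hlip t (t - ξ)
    simpa using this
  rw [h3]
  calc ‖∫ t in x..(x + ξ), (deriv f t - deriv f (t - ξ))‖
      ≤ (S * |ξ|) * |x + ξ - x| := h4
    _ = S * ξ ^ 2 := by
        have : x + ξ - x = ξ := by ring
        rw [this, mul_assoc, ← abs_mul, ← sq, abs_sq]

lemma psi_integrable {α : ℝ} (hα0 : 0 < α) (hα2 : α < 2) :
    IntegrableOn (fun ξ : ℝ => min (ξ ^ (1 - α)) (ξ ^ (-(α + 1)))) (Ioi 0) volume := by
  have hmeas : Measurable fun ξ : ℝ => min (ξ ^ (1 - α)) (ξ ^ (-(α + 1))) :=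
    (measurable_id.pow_const _).min (measurable_id.pow_const _)
  have hsplit : Ioi (0:ℝ) = Ioc 0 1 ∪ Ioi 1 := (Ioc_union_Ioi_eq_Ioi zero_le_one).symm
  rw [hsplit]
  apply IntegrableOn.union
  · -- on (0, 1]: dominated by ξ ^ (1 - α)
    have hint : IntegrableOn (fun ξ : ℝ => ξ ^ (1 - α)) (Ioc 0 1) volume := by
      have := (intervalIntegral.intervalIntegrable_rpow' (a := 0) (b := 1)
        (r := 1 - α) (by linarith)).1
      simpa using this
    refine hint.mono' (hmeas.aestronglyMeasurable.restrict) ?_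
    rw [ae_restrict_iff' measurableSet_Ioc]
    filter_upwards with ξ hξ
    have hξ0 : 0 < ξ := hξ.1
    have h1 : 0 ≤ ξ ^ (-(α + 1)) := rpow_nonneg hξ0.le _
    have h2 : 0 ≤ ξ ^ (1 - α) := rpow_nonneg hξ0.le _
    have hmin : (0:ℝ) ≤ min (ξ ^ (1 - α)) (ξ ^ (-(α + 1))) := le_min h2 h1
    show ‖min (ξ ^ (1 - α)) (ξ ^ (-(α + 1)))‖ ≤ ξ ^ (1 - α)
    rw [Real.norm_eq_abs, abs_of_nonneg hmin]
    exact min_le_left _ _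
  · -- on (1, ∞): dominated by ξ ^ (-(α+1))
    have hint : IntegrableOn (fun ξ : ℝ => ξ ^ (-(α + 1))) (Ioi 1) volume :=
      integrableOn_Ioi_rpow_of_lt (by linarith) zero_lt_one
    refine hint.mono' (hmeas.aestronglyMeasurable.restrict) ?_
    rw [ae_restrict_iff' measurableSet_Ioi]
    filter_upwards with ξ hξ
    have hξ0 : (0:ℝ) < ξ := lt_trans zero_lt_one hξ
    have h1 : 0 ≤ ξ ^ (-(α + 1)) := rpow_nonneg hξ0.le _
    have h2 : 0 ≤ ξ ^ (1 - α) := rpow_nonneg hξ0.le _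
    have hmin : (0:ℝ) ≤ min (ξ ^ (1 - α)) (ξ ^ (-(α + 1))) := le_min h2 h1
    show ‖min (ξ ^ (1 - α)) (ξ ^ (-(α + 1)))‖ ≤ ξ ^ (-(α + 1))
    rw [Real.norm_eq_abs, abs_of_nonneg hmin]
    exact min_le_right _ _

lemma integrable_kernel (f g : SchwartzMap ℝ ℝ) {α : ℝ} (hα0 : 0 < α) (hα2 : α < 2) :
    Integrable
      (fun p : ℝ × ℝ => (f (p.1 + p.2) - 2 * f p.1 + f (p.1 - p.2)) * p.2 ^ (-(α + 1)) * g p.1)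
      (volume.prod (volume.restrict (Ioi 0))) := by
  obtain ⟨M, hM0, hM⟩ := schwartz_bdd f
  obtain ⟨S, hS0, hS⟩ := schwartz_second_diff_bdd f
  set C : ℝ := max (4 * M) S with hC
  have hC0 : 0 ≤ C := le_max_of_le_right hS0
  -- measurability
  have hmeas : AEStronglyMeasurable
      (fun p : ℝ × ℝ => (f (p.1 + p.2) - 2 * f p.1 + f (p.1 - p.2)) * p.2 ^ (-(α + 1)) * g p.1)
      (volume.prod (volume.restrict (Ioi 0))) := by
    have hc : Continuous fun p : ℝ × ℝ => (f (p.1 + p.2) - 2 * f p.1 + f (p.1 - p.2)) :=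
      ((f.continuous.comp (continuous_fst.add continuous_snd)).sub
        (continuous_const.mul (f.continuous.comp continuous_fst))).add
        (f.continuous.comp (continuous_fst.sub continuous_snd))
    exact (((hc.measurable.mul ((measurable_id.pow_const (-(α+1))).comp measurable_snd)).mul
      (g.continuous.measurable.comp measurable_fst))).aestronglyMeasurable
  -- dominating function
  have hdom : Integrable
      (fun p : ℝ × ℝ => (C * ‖g p.1‖) * min (p.2 ^ (1 - α)) (p.2 ^ (-(α + 1))))
      (volume.prod (volume.restrict (Ioi 0))) :=
    Integrable.mul_prod ((g.integrable.norm).const_mul C) (psi_integrable hα0 hα2)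
  refine hdom.mono' hmeas ?_
  -- a.e. on the product, the second coordinate is positive
  have hae : ∀ᵐ p : ℝ × ℝ ∂(volume.prod (volume.restrict (Ioi 0))), p.2 ∈ Ioi (0:ℝ) := by
    rw [show (volume : Measure ℝ).prod (volume.restrict (Ioi 0))
        = ((volume : Measure ℝ).prod (volume : Measure ℝ)).restrict ((univ : Set ℝ) ×ˢ (Ioi (0:ℝ))) by
      rw [← Measure.prod_restrict, Measure.restrict_univ]]
    rw [ae_restrict_iff' (MeasurableSet.univ.prod measurableSet_Ioi)]
    filter_upwards with p hp
    exact hp.2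
  filter_upwards [hae] with p hp
  obtain ⟨x, ξ⟩ := p
  have hξ0 : (0:ℝ) < ξ := hp
  have hK0 : 0 ≤ ξ ^ (-(α + 1)) := rpow_nonneg hξ0.le _
  have key : |f (x + ξ) - 2 * f x + f (x - ξ)| * ξ ^ (-(α + 1))
      ≤ C * min (ξ ^ (1 - α)) (ξ ^ (-(α + 1))) := by
    rcases le_total (ξ ^ (1 - α)) (ξ ^ (-(α + 1))) with h | h
    · rw [min_eq_left h]
      have h2 : |f (x + ξ) - 2 * f x + f (x - ξ)| ≤ S * ξ ^ 2 := hS x ξ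
      have hrw : ξ ^ (2:ℕ) * ξ ^ (-(α + 1)) = ξ ^ (1 - α) := by
        rw [← Real.rpow_natCast ξ 2, ← Real.rpow_add hξ0]
        congr 1
        push_cast
        ring
      calc |f (x + ξ) - 2 * f x + f (x - ξ)| * ξ ^ (-(α + 1))
          ≤ (S * ξ ^ 2) * ξ ^ (-(α + 1)) := mul_le_mul_of_nonneg_right h2 hK0
        _ = S * (ξ ^ (2:ℕ) * ξ ^ (-(α + 1))) := by ring
        _ = S * ξ ^ (1 - α) := by rw [hrw]
        _ ≤ C * ξ ^ (1 - α) :=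
            mul_le_mul_of_nonneg_right (le_max_right _ _) (rpow_nonneg hξ0.le _)
    · rw [min_eq_right h]
      have h2 : |f (x + ξ) - 2 * f x + f (x - ξ)| ≤ 4 * M := by
        have := hM (x + ξ); have := hM x; have := hM (x - ξ)
        simp only [Real.norm_eq_abs] at *
        calc |f (x + ξ) - 2 * f x + f (x - ξ)|
            ≤ |f (x + ξ)| + 2 * |f x| + |f (x - ξ)| := by
              refine (abs_add_le _ _).trans ?_
              gcongr
              refine (abs_sub _ _).trans ?_
              simp [abs_mul]
          _ ≤ M + 2 * M + M := by gcongr <;> assumption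
          _ = 4 * M := by ring
      calc |f (x + ξ) - 2 * f x + f (x - ξ)| * ξ ^ (-(α + 1))
          ≤ (4 * M) * ξ ^ (-(α + 1)) := mul_le_mul_of_nonneg_right h2 hK0
        _ ≤ C * ξ ^ (-(α + 1)) := mul_le_mul_of_nonneg_right (le_max_left _ _) hK0
  calc ‖(f (x + ξ) - 2 * f x + f (x - ξ)) * ξ ^ (-(α + 1)) * g x‖
      = |f (x + ξ) - 2 * f x + f (x - ξ)| * ξ ^ (-(α + 1)) * ‖g x‖ := by
        rw [Real.norm_eq_abs, abs_mul, abs_mul, abs_of_nonneg hK0, Real.norm_eq_abs]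
    _ ≤ (C * min (ξ ^ (1 - α)) (ξ ^ (-(α + 1)))) * ‖g x‖ :=
        mul_le_mul_of_nonneg_right key (norm_nonneg _)
    _ = (C * ‖g x‖) * min (ξ ^ (1 - α)) (ξ ^ (-(α + 1))) := by ring

lemma key_translate (f g : SchwartzMap ℝ ℝ) (ξ : ℝ) :
    ∫ x : ℝ, (f (x + ξ) - 2 * f x + f (x - ξ)) * g x
      = ∫ x : ℝ, f x * (g (x + ξ) - 2 * g x + g (x - ξ)) := by
  obtain ⟨M, hM0, hM⟩ := schwartz_bdd f
  have hfb : ∀ c : ℝ, AEStronglyMeasurable (fun x : ℝ => f (x + c)) volume := fun c =>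
    (f.continuous.comp (continuous_id.add continuous_const)).aestronglyMeasurable
  have hfb' : ∀ c : ℝ, AEStronglyMeasurable (fun x : ℝ => f (x - c)) volume := fun c =>
    (f.continuous.comp (continuous_id.sub continuous_const)).aestronglyMeasurable
  have h1 : Integrable (fun x : ℝ => f (x + ξ) * g x) volume :=
    g.integrable.bdd_mul (hfb ξ) (Filter.Eventually.of_forall fun x => hM _)
  have h0 : Integrable (fun x : ℝ => f x * g x) volume :=
    g.integrable.bdd_mul f.continuous.aestronglyMeasurable (Filter.Eventually.of_forall fun x => hM _)
  have h2 : Integrable (fun x : ℝ => f (x - ξ) * g x) volume :=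
    g.integrable.bdd_mul (hfb' ξ) (Filter.Eventually.of_forall fun x => hM _)
  have k1 : Integrable (fun x : ℝ => f x * g (x + ξ)) volume :=
    (g.integrable.comp_add_right ξ).bdd_mul f.continuous.aestronglyMeasurable
      (Filter.Eventually.of_forall fun x => hM _)
  have k0 : Integrable (fun x : ℝ => f x * g x) volume := h0
  have k2 : Integrable (fun x : ℝ => f x * g (x - ξ)) volume :=
    (g.integrable.comp_sub_right ξ).bdd_mul f.continuous.aestronglyMeasurable
      (Filter.Eventually.of_forall fun x => hM _)
  have t1 : ∫ x : ℝ, f (x + ξ) * g x = ∫ x : ℝ, f x * g (x - ξ) := by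
    have := integral_add_right_eq_self (μ := volume) (fun x : ℝ => f x * g (x - ξ)) ξ
    simpa using this
  have t2 : ∫ x : ℝ, f (x - ξ) * g x = ∫ x : ℝ, f x * g (x + ξ) := by
    have := integral_sub_right_eq_self (μ := volume) (fun x : ℝ => f x * g (x + ξ)) ξ
    simpa using this
  have e1 : (fun x : ℝ => (f (x + ξ) - 2 * f x + f (x - ξ)) * g x)
      = fun x : ℝ => (f (x + ξ) * g x - 2 * (f x * g x)) + f (x - ξ) * g x := by
    funext x; ring
  have e2 : (fun x : ℝ => f x * (g (x + ξ) - 2 * g x + g (x - ξ)))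
      = fun x : ℝ => (f x * g (x - ξ) - 2 * (f x * g x)) + f x * g (x + ξ) := by
    funext x; ring
  rw [e1, e2,
    integral_add (f := fun x : ℝ => f (x + ξ) * g x - 2 * (f x * g x))
      (g := fun x : ℝ => f (x - ξ) * g x) (h1.sub (h0.const_mul 2)) h2,
    integral_add (f := fun x : ℝ => f x * g (x - ξ) - 2 * (f x * g x))
      (g := fun x : ℝ => f x * g (x + ξ)) (k2.sub (k0.const_mul 2)) k1,
    integral_sub (f := fun x : ℝ => f (x + ξ) * g x)
      (g := fun x : ℝ => 2 * (f x * g x)) h1 (h0.const_mul 2),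
    integral_sub (f := fun x : ℝ => f x * g (x - ξ))
      (g := fun x : ℝ => 2 * (f x * g x)) k2 (k0.const_mul 2),
    t1, t2]

lemma core (f g : SchwartzMap ℝ ℝ) {α : ℝ} (hα0 : 0 < α) (hα2 : α < 2) :
    ∫ x : ℝ, (∫ ξ in Ioi (0:ℝ), (f (x + ξ) - 2 * f x + f (x - ξ)) * ξ ^ (-(α + 1))) * g x
      = ∫ x : ℝ, f x * ∫ ξ in Ioi (0:ℝ), (g (x + ξ) - 2 * g x + g (x - ξ)) * ξ ^ (-(α + 1)) := by
  have step1 : ∀ x : ℝ,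
      (∫ ξ in Ioi (0:ℝ), (f (x + ξ) - 2 * f x + f (x - ξ)) * ξ ^ (-(α + 1))) * g x
      = ∫ ξ in Ioi (0:ℝ), (f (x + ξ) - 2 * f x + f (x - ξ)) * ξ ^ (-(α + 1)) * g x := by
    intro x
    exact (integral_mul_const (g x) _).symm
  have step5 : ∀ x : ℝ,
      (∫ ξ in Ioi (0:ℝ), f x * ((g (x + ξ) - 2 * g x + g (x - ξ)) * ξ ^ (-(α + 1))))
      = f x * ∫ ξ in Ioi (0:ℝ), (g (x + ξ) - 2 * g x + g (x - ξ)) * ξ ^ (-(α + 1)) := by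
    intro x
    exact integral_const_mul (f x) _
  simp only [step1]
  rw [show (fun x : ℝ => f x * ∫ ξ in Ioi (0:ℝ),
      (g (x + ξ) - 2 * g x + g (x - ξ)) * ξ ^ (-(α + 1)))
      = fun x : ℝ => ∫ ξ in Ioi (0:ℝ),
      f x * ((g (x + ξ) - 2 * g x + g (x - ξ)) * ξ ^ (-(α + 1))) from
    funext fun x => (step5 x).symm]
  -- Fubini both ways
  have hF : Integrable
      (Function.uncurry fun (x ξ : ℝ) =>
        (f (x + ξ) - 2 * f x + f (x - ξ)) * ξ ^ (-(α + 1)) * g x)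
      (volume.prod (volume.restrict (Ioi 0))) := integrable_kernel f g hα0 hα2
  have hG : Integrable
      (Function.uncurry fun (x ξ : ℝ) =>
        f x * ((g (x + ξ) - 2 * g x + g (x - ξ)) * ξ ^ (-(α + 1))))
      (volume.prod (volume.restrict (Ioi 0))) := by
    refine (integrable_kernel g f hα0 hα2).congr ?_
    filter_upwards with p
    simp only [Function.uncurry]
    ring
  rw [integral_integral_swap hF, integral_integral_swap hG]
  -- now equality of the two ξ-integrals
  refine integral_congr_ae (Filter.Eventually.of_forall fun ξ => ?_)
  have e1 : (fun x : ℝ => (f (x + ξ) - 2 * f x + f (x - ξ)) * ξ ^ (-(α + 1)) * g x)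
      = fun x : ℝ => ((f (x + ξ) - 2 * f x + f (x - ξ)) * g x) * ξ ^ (-(α + 1)) := by
    funext x; ring
  have e2 : (fun x : ℝ => f x * ((g (x + ξ) - 2 * g x + g (x - ξ)) * ξ ^ (-(α + 1))))
      = fun x : ℝ => (f x * (g (x + ξ) - 2 * g x + g (x - ξ))) * ξ ^ (-(α + 1)) := by
    funext x; ring
  beta_reduce
  rw [e1, e2, integral_mul_const, integral_mul_const, key_translate f g ξ]

/-- The fractional derivative
`₂D^α f(x) = Γ(1+α) (sin(απ/2)/π) ∫_0^∞ (f(x+ξ) - 2f(x) + f(x-ξ)) ξ^{-(α+1)} dξ` is symmetric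
with respect to the L² pairing: `∫ (₂D^α f) g = ∫ f (₂D^α g)`, for Schwartz `f`, `g` and
`0 < α < 2`. -/
theorem fractional_deriv_two_symmetric (f g : SchwartzMap ℝ ℝ) (α : ℝ)
    (hα0 : 0 < α) (hα2 : α < 2) :
    (∫ x : ℝ, (Real.Gamma (1 + α) * (Real.sin (α * π / 2) / π) *
        ∫ ξ in Set.Ioi (0 : ℝ), (f (x + ξ) - 2 * f x + f (x - ξ)) * ξ ^ (-(α + 1))) * g x)
      = ∫ x : ℝ, f x * (Real.Gamma (1 + α) * (Real.sin (α * π / 2) / π) *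
        ∫ ξ in Set.Ioi (0 : ℝ), (g (x + ξ) - 2 * g x + g (x - ξ)) * ξ ^ (-(α + 1))) := by
  set c : ℝ := Real.Gamma (1 + α) * (Real.sin (α * π / 2) / π) with hc
  have l1 : (fun x : ℝ => (c * ∫ ξ in Ioi (0:ℝ),
      (f (x + ξ) - 2 * f x + f (x - ξ)) * ξ ^ (-(α + 1))) * g x)
      = fun x : ℝ => c * ((∫ ξ in Ioi (0:ℝ),
      (f (x + ξ) - 2 * f x + f (x - ξ)) * ξ ^ (-(α + 1))) * g x) := by
    funext x; ring
  have l2 : (fun x : ℝ => f x * (c * ∫ ξ in Ioi (0:ℝ),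
      (g (x + ξ) - 2 * g x + g (x - ξ)) * ξ ^ (-(α + 1))))
      = fun x : ℝ => c * (f x * ∫ ξ in Ioi (0:ℝ),
      (g (x + ξ) - 2 * g x + g (x - ξ)) * ξ ^ (-(α + 1))) := by
    funext x; ring
  rw [l1, l2, integral_const_mul, integral_const_mul, core f g hα0 hα2]
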